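/- For s, t ∈ (-1,1) with the kernel entries K₁₁(s,t) = (s-t)/(√((1-s²)(1-t²))(1-st)²), K₁₂(s,t) = √((1-t²)/(1-s²))/(1-st), and K₂₂(s,t) = sgn(t-s)·arcsin c(s,t) with c(s,t) = √((1-s²)(1-t²))/(1-st), one has for s ≠ t: ∂K₂₂/∂s (s,t) = K₁₂(s,t) and ∂²K₂₂/∂s∂t (s,t) = K₁₁(s,t). -/

import Mathlib

/-! Off the diagonal the factor `sgn (t - u)` is locally constant, so only `arcsin c` is
differentiated. Since `1 - c² = ((s - t) / (1 - s t))²`, the chain rule for `arcsin` contributes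
`(1 - s t) / |s - t|`, and together with the `t - s` coming from `∂c/∂s` this is the sign
`sgn (t - s)`, which squares to `1` against the outer sign factor. The second identity is the
quotient rule for `√(1 - v²) / (1 - s v)`. -/

open Filter Topology Set Real

namespace Real

lemma div_abs_eq_sign (r : ℝ) : r / |r| = sign r := by
  rcases lt_trichotomy r 0 with h | rfl | h
  · rw [abs_of_neg h, sign_of_neg h, div_neg, div_self h.ne]
  · simp
  · rw [abs_of_pos h, sign_of_pos h, div_self h.ne']

lemma sign_mul_self_of_ne_zero {r : ℝ} (hr : r ≠ 0) : sign r * sign r = 1 := by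
  rcases sign_apply_eq_of_ne_zero r hr with h | h <;> rw [h] <;> norm_num

lemma sign_eventuallyEq {r : ℝ} (hr : r ≠ 0) : sign =ᶠ[𝓝 r] fun _ ↦ sign r := by
  rcases hr.lt_or_gt with h | h
  · filter_upwards [Iio_mem_nhds h] with x hx
    rw [sign_of_neg hx, sign_of_neg h]
  · filter_upwards [Ioi_mem_nhds h] with x hx
    rw [sign_of_pos hx, sign_of_pos h]

end Real

lemma hasDerivAt_sqrt_one_sub_sq_div_one_sub_mul {a b : ℝ} (ha : 0 < 1 - a ^ 2)
    (hab : 1 - a * b ≠ 0) :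
    HasDerivAt (fun u ↦ √(1 - u ^ 2) / (1 - u * b))
      ((b - a) / (√(1 - a ^ 2) * (1 - a * b) ^ 2)) a := by
  have hnum : HasDerivAt (fun u ↦ √(1 - u ^ 2)) (-(2 * a) / (2 * √(1 - a ^ 2))) a := by
    simpa using ((hasDerivAt_pow 2 a).const_sub 1).sqrt ha.ne'
  have hden : HasDerivAt (fun u ↦ 1 - u * b) (-b) a := by
    simpa using (hasDerivAt_mul_const b).const_sub 1
  refine (hnum.div hden hab).congr_deriv ?_
  have hsqrt : √(1 - a ^ 2) ^ 2 = 1 - a ^ 2 := sq_sqrt ha.le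
  have hsqrt_ne := (sqrt_pos.mpr ha).ne'
  field_simp
  linear_combination b * hsqrt

section Correlation

variable {s t : ℝ}

lemma one_sub_sq_pos (hs : s ∈ Ioo (-1 : ℝ) 1) : 0 < 1 - s ^ 2 := by
  nlinarith [hs.1, hs.2]

lemma one_sub_mul_pos (hs : s ∈ Ioo (-1 : ℝ) 1) (ht : t ∈ Ioo (-1 : ℝ) 1) :
    0 < 1 - s * t := by
  nlinarith [hs.1, hs.2, ht.1, ht.2]

/-- The paper's `c(s,t)`: the correlation at `s` and `t` of the Gaussian power series
`∑ ξₖ xᵏ`, normalized to unit variance. -/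
noncomputable def correlation (s t : ℝ) : ℝ := √((1 - s ^ 2) * (1 - t ^ 2)) / (1 - s * t)

lemma one_sub_correlation_sq (hs : s ∈ Ioo (-1 : ℝ) 1) (ht : t ∈ Ioo (-1 : ℝ) 1) :
    1 - correlation s t ^ 2 = ((s - t) / (1 - s * t)) ^ 2 := by
  have hst := one_sub_mul_pos hs ht
  rw [correlation, div_pow, sq_sqrt (mul_pos (one_sub_sq_pos hs) (one_sub_sq_pos ht)).le]
  field_simp
  ring

lemma sqrt_one_sub_correlation_sq (hs : s ∈ Ioo (-1 : ℝ) 1) (ht : t ∈ Ioo (-1 : ℝ) 1) :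
    √(1 - correlation s t ^ 2) = |s - t| / (1 - s * t) := by
  rw [one_sub_correlation_sq hs ht, sqrt_sq_eq_abs, abs_div, abs_of_pos (one_sub_mul_pos hs ht)]

lemma correlation_nonneg (hs : s ∈ Ioo (-1 : ℝ) 1) (ht : t ∈ Ioo (-1 : ℝ) 1) :
    0 ≤ correlation s t :=
  div_nonneg (sqrt_nonneg _) (one_sub_mul_pos hs ht).le

lemma correlation_lt_one (hs : s ∈ Ioo (-1 : ℝ) 1) (ht : t ∈ Ioo (-1 : ℝ) 1) (hst : s ≠ t) :
    correlation s t < 1 := by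
  have hgap : 0 < 1 - correlation s t ^ 2 := by
    rw [one_sub_correlation_sq hs ht]
    exact sq_pos_of_ne_zero (div_ne_zero (sub_ne_zero.mpr hst) (one_sub_mul_pos hs ht).ne')
  nlinarith [correlation_nonneg hs ht]

lemma hasDerivAt_correlation_left (hs : s ∈ Ioo (-1 : ℝ) 1) (ht : t ∈ Ioo (-1 : ℝ) 1) :
    HasDerivAt (fun u ↦ correlation u t)
      (√(1 - t ^ 2) * ((t - s) / (√(1 - s ^ 2) * (1 - s * t) ^ 2))) s := by
  have hfun : (fun u ↦ correlation u t) = fun u ↦ √(1 - t ^ 2) * (√(1 - u ^ 2) / (1 - u * t)) := by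
    funext u
    rw [correlation, sqrt_mul' _ (one_sub_sq_pos ht).le]
    ring
  rw [hfun]
  exact (hasDerivAt_sqrt_one_sub_sq_div_one_sub_mul (one_sub_sq_pos hs)
    (one_sub_mul_pos hs ht).ne').const_mul _

lemma hasDerivAt_arcsin_correlation_left (hs : s ∈ Ioo (-1 : ℝ) 1) (ht : t ∈ Ioo (-1 : ℝ) 1)
    (hst : s ≠ t) :
    HasDerivAt (fun u ↦ arcsin (correlation u t))
      (sign (t - s) * (√((1 - t ^ 2) / (1 - s ^ 2)) / (1 - s * t))) s := by
  have hc_ne_neg_one : correlation s t ≠ -1 := by linarith [correlation_nonneg hs ht]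
  refine ((hasDerivAt_arcsin hc_ne_neg_one (correlation_lt_one hs ht hst).ne).comp s
    (hasDerivAt_correlation_left hs ht)).congr_deriv ?_
  rw [sqrt_one_sub_correlation_sq hs ht, abs_sub_comm, ← div_abs_eq_sign,
    sqrt_div' _ (one_sub_sq_pos hs).le]
  have hst_pos := one_sub_mul_pos hs ht
  have hsqrt_pos := sqrt_pos.mpr (one_sub_sq_pos hs)
  field_simp

end Correlation

/-- With K₂₂(s,t) = sgn(t-s) arcsin c(s,t), K₁₂(s,t) = √((1-t²)/(1-s²))/(1-st),
K₁₁(s,t) = (s-t)/(√((1-s²)(1-t²))(1-st)²), for s ≠ t in (-1,1):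
∂K₂₂/∂s = K₁₂ and ∂²K₂₂/∂s∂t = ∂K₁₂/∂t = K₁₁. -/
theorem kernel_derivatives (s t : ℝ)
    (hs : s ∈ Set.Ioo (-1 : ℝ) 1) (ht : t ∈ Set.Ioo (-1 : ℝ) 1) (hst : s ≠ t) :
    HasDerivAt
      (fun u : ℝ => Real.sign (t - u)
        * Real.arcsin (Real.sqrt ((1 - u ^ 2) * (1 - t ^ 2)) / (1 - u * t)))
      (Real.sqrt ((1 - t ^ 2) / (1 - s ^ 2)) / (1 - s * t)) s ∧
    HasDerivAt
      (fun v : ℝ => Real.sqrt ((1 - v ^ 2) / (1 - s ^ 2)) / (1 - s * v))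
      ((s - t) / (Real.sqrt ((1 - s ^ 2) * (1 - t ^ 2)) * (1 - s * t) ^ 2)) t := by
  have hts : t - s ≠ 0 := sub_ne_zero.mpr hst.symm
  constructor
  · have hsign : (fun u ↦ sign (t - u)) =ᶠ[𝓝 s] fun _ ↦ sign (t - s) :=
      ((continuous_const.sub continuous_id).tendsto s).eventually (sign_eventuallyEq hts)
    have h := (hasDerivAt_arcsin_correlation_left hs ht hst).const_mul (sign (t - s))
    rw [← mul_assoc, sign_mul_self_of_ne_zero hts, one_mul] at h
    exact h.congr_of_eventuallyEq (hsign.mul EventuallyEq.rfl)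
  · have hfun : (fun v ↦ √((1 - v ^ 2) / (1 - s ^ 2)) / (1 - s * v))
        = fun v ↦ √(1 - v ^ 2) / (1 - v * s) / √(1 - s ^ 2) := by
      funext v
      rw [sqrt_div' _ (one_sub_sq_pos hs).le, mul_comm s v]
      ring
    rw [hfun, sqrt_mul' _ (one_sub_sq_pos ht).le, mul_comm s t]
    refine ((hasDerivAt_sqrt_one_sub_sq_div_one_sub_mul (one_sub_sq_pos ht)
      (one_sub_mul_pos ht hs).ne').div_const (√(1 - s ^ 2))).congr_deriv ?_
    rw [div_div]
    congr 1
    ring
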